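/- arXiv:2306.02429 — 2 statements merged into one kernel-verified Lean document; each statement's English description precedes it below -/
import Mathlib

section
/- Let ℓ : ℝ^n → ℝ be differentiable with L-Lipschitz gradient, X ⊆ ℝ^n nonempty compact convex with diameter D. Let x ∈ X, F ∈ ℝ^n an arbitrary vector, s ∈ argmin_{u∈X} ⟨F, u⟩, and x⁺ = (1−γ)x + γs for γ ∈ [0,1]. Then ℓ(x⁺) ≤ ℓ(x) − γ G(x) + γ‖∇ℓ(x) − F‖·D + (L/2)γ²D², where G(x) = max_{u∈X} ⟨∇ℓ(x), x − u⟩ is the Frank-Wolfe gap. -/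
open scoped RealInnerProductSpace

/-- One-step descent of the inexact Frank–Wolfe update. -/
theorem stmt_7 {n : ℕ}
    (ℓ : EuclideanSpace ℝ (Fin n) → ℝ)
    (gradℓ : EuclideanSpace ℝ (Fin n) → EuclideanSpace ℝ (Fin n))
    (L D : ℝ) (hL : 0 ≤ L) (hD : 0 ≤ D)
    (hsmooth : ∀ x y : EuclideanSpace ℝ (Fin n),
      ℓ y ≤ ℓ x + ⟪gradℓ x, y - x⟫ + L / 2 * ‖y - x‖ ^ 2)
    (X : Set (EuclideanSpace ℝ (Fin n)))
    (hXne : X.Nonempty) (hXcomp : IsCompact X) (hXconv : Convex ℝ X)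
    (hdiam : ∀ u ∈ X, ∀ v ∈ X, ‖u - v‖ ≤ D)
    (x s xplus F : EuclideanSpace ℝ (Fin n)) (γ Gx : ℝ)
    (hx : x ∈ X) (hs : s ∈ X) (hsmin : ∀ u ∈ X, ⟪F, s⟫ ≤ ⟪F, u⟫)
    (hγ0 : 0 ≤ γ) (hγ1 : γ ≤ 1)
    (hupd : xplus = (1 - γ) • x + γ • s)
    (hG : IsGreatest {r : ℝ | ∃ u ∈ X, r = ⟪gradℓ x, x - u⟫} Gx) :
    ℓ xplus ≤ ℓ x - γ * Gx + γ * ‖gradℓ x - F‖ * D + L / 2 * γ ^ 2 * D ^ 2 := by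
  obtain ⟨u, huX, hGu⟩ := hG.1
  have hdiff : xplus - x = γ • (s - x) := by rw [hupd]; module
  have h1 := hsmooth x xplus
  have hnorm : ‖xplus - x‖ ^ 2 = γ ^ 2 * ‖s - x‖ ^ 2 := by
    rw [hdiff, norm_smul, Real.norm_eq_abs, mul_pow, sq_abs]
  have hin : ⟪gradℓ x, xplus - x⟫ = γ * ⟪gradℓ x, s - x⟫ := by
    rw [hdiff, real_inner_smul_right]
  have hsplit : ⟪gradℓ x, s - x⟫
      = ⟪gradℓ x - F, s - u⟫ + (⟪F, s⟫ - ⟪F, u⟫) + ⟪gradℓ x, u - x⟫ := by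
    simp only [inner_sub_left, inner_sub_right]; ring
  have hb1 : ⟪gradℓ x - F, s - u⟫ ≤ ‖gradℓ x - F‖ * D := by
    calc ⟪gradℓ x - F, s - u⟫ ≤ ‖gradℓ x - F‖ * ‖s - u‖ := real_inner_le_norm _ _
    _ ≤ ‖gradℓ x - F‖ * D := by
        exact mul_le_mul_of_nonneg_left (hdiam s hs u huX) (norm_nonneg _)
  have hb2 : ⟪F, s⟫ - ⟪F, u⟫ ≤ 0 := sub_nonpos.mpr (hsmin u huX)
  have hb3 : ⟪gradℓ x, u - x⟫ = -Gx := by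
    rw [hGu]; simp [inner_sub_right]
  have hkey : ⟪gradℓ x, s - x⟫ ≤ ‖gradℓ x - F‖ * D - Gx := by
    rw [hsplit, hb3]; linarith
  have hsx : ‖s - x‖ ≤ D := hdiam s hs x hx
  have hsx2 : ‖s - x‖ ^ 2 ≤ D ^ 2 := by
    exact pow_le_pow_left₀ (norm_nonneg _) hsx 2
  rw [hin, hnorm] at h1
  nlinarith [mul_le_mul_of_nonneg_left hkey hγ0, sq_nonneg γ,
    mul_le_mul_of_nonneg_left hsx2 (mul_nonneg hL (sq_nonneg γ))]
end

section
/- Let X ⊆ ℝ^n be compact convex with diameter D, ℓ : ℝ^n → ℝ convex, differentiable, with L-Lipschitz gradient on X, and x* ∈ argmin_X ℓ. Suppose iterates satisfy x_{k+1} = (1−γ)x_k + γ s_k with s_k ∈ argmin_{s∈X}⟨F_k, s⟩, γ ∈ (0,1), and ‖∇ℓ(x_k) − F_k‖ ≤ ε_k. Then ℓ(x_{k+1}) − ℓ(x*) ≤ (1−γ)(ℓ(x_k) − ℓ(x*)) + γ ε_k D + (L/2)γ²D². -/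
open scoped RealInnerProductSpace

variable {E : Type*} [NormedAddCommGroup E] [InnerProductSpace ℝ E] [CompleteSpace E]
-- derivative of t ↦ ℓ (u + t • d)
lemma line_hasDerivAt (ℓ : E → ℝ) (g : E → E) (hdiff : ∀ x, HasGradientAt ℓ (g x) x)
    (u d : E) (t : ℝ) :
    HasDerivAt (fun t : ℝ => ℓ (u + t • d)) ⟪g (u + t • d), d⟫ t := by
  have hline : HasDerivAt (fun t : ℝ => u + t • d) d t := by
    simpa using ((hasDerivAt_id t).smul_const d).const_add u
  have := (hdiff (u + t • d)).hasFDerivAt.comp_hasDerivAt t hline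
  simpa [InnerProductSpace.toDual_apply_apply, Function.comp_def] using this

-- first-order convexity: ⟪g x, y - x⟫ ≤ ℓ y - ℓ x
lemma grad_convex_le (ℓ : E → ℝ) (g : E → E) (hconv : ConvexOn ℝ Set.univ ℓ)
    (hdiff : ∀ x, HasGradientAt ℓ (g x) x) (x y : E) :
    ⟪g x, y - x⟫ ≤ ℓ y - ℓ x := by
  set φ : ℝ → ℝ := fun t => ℓ (x + t • (y - x)) with hφ
  have hd : HasDerivAt φ ⟪g x, y - x⟫ 0 := by
    simpa [hφ] using line_hasDerivAt ℓ g hdiff x (y - x) 0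
  have hds : HasDerivWithinAt φ ⟪g x, y - x⟫ (Set.Ioi (0:ℝ)) 0 := hd.hasDerivWithinAt
  have hslope := hasDerivWithinAt_iff_tendsto_slope.1 hds
  have hset : Set.Ioi (0:ℝ) \ {0} = Set.Ioi 0 := by
    ext t; simp
  rw [hset] at hslope
  refine le_of_tendsto hslope ?_
  filter_upwards [Ioo_mem_nhdsGT_of_mem (by norm_num : (0:ℝ) ∈ Set.Ico 0 1)] with t ht
  have hcomb : x + t • (y - x) = (1 - t) • x + t • y := by
    rw [smul_sub, sub_smul, one_smul]; abel
  have h0 : φ t ≤ (1 - t) * ℓ x + t * ℓ y := by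
    rw [hφ]; dsimp only; rw [hcomb]
    exact hconv.2 (Set.mem_univ x) (Set.mem_univ y)
      (by linarith [ht.2] : (0:ℝ) ≤ 1 - t) (le_of_lt ht.1) (by ring)
  have hφ0 : φ 0 = ℓ x := by simp [hφ]
  rw [slope_def_field]
  rw [div_le_iff₀ (by linarith [ht.1] : (0:ℝ) < t - 0)]
  rw [hφ0]; nlinarith [ht.1, h0]

-- descent lemma on a convex set with Lipschitz gradient
lemma descent_lemma (X : Set E) (hXconv : Convex ℝ X) (L : ℝ) (hL : 0 ≤ L)
    (ℓ : E → ℝ) (g : E → E) (hdiff : ∀ x, HasGradientAt ℓ (g x) x)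
    (hlip : ∀ u ∈ X, ∀ v ∈ X, ‖g u - g v‖ ≤ L * ‖u - v‖)
    (u : E) (hu : u ∈ X) (v : E) (hv : v ∈ X) :
    ℓ v ≤ ℓ u + ⟪g u, v - u⟫ + L / 2 * ‖v - u‖ ^ 2 := by
  set d : E := v - u with hd
  set ψ : ℝ → ℝ := fun t => ℓ (u + t • d) - t * ⟪g u, d⟫ - L / 2 * ‖d‖ ^ 2 * t ^ 2 with hψ
  have hmem : ∀ t ∈ Set.Icc (0:ℝ) 1, u + t • d ∈ X := by
    intro t ht
    have : u + t • d = (1 - t) • u + t • v := by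
      rw [hd, smul_sub, sub_smul, one_smul]; abel
    rw [this]
    exact hXconv hu hv (by linarith [ht.2]) ht.1 (by ring)
  have hψd : ∀ t : ℝ, HasDerivAt ψ (⟪g (u + t • d), d⟫ - ⟪g u, d⟫ - L * ‖d‖ ^ 2 * t) t := by
    intro t
    have h1 := line_hasDerivAt ℓ g hdiff u d t
    have h2 : HasDerivAt (fun t : ℝ => t * ⟪g u, d⟫) ⟪g u, d⟫ t := hasDerivAt_mul_const _
    have h3 : HasDerivAt (fun t : ℝ => L / 2 * ‖d‖ ^ 2 * t ^ 2) (L * ‖d‖ ^ 2 * t) t := by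
      have := (hasDerivAt_pow 2 t).const_mul (L / 2 * ‖d‖ ^ 2)
      convert this using 1
      · rfl
      · rfl
      · norm_num
        ring
    exact (h1.sub h2).sub h3
  have hanti : AntitoneOn ψ (Set.Icc (0:ℝ) 1) := by
    apply antitoneOn_of_deriv_nonpos (convex_Icc 0 1)
    · have : Differentiable ℝ ψ := fun t => (hψd t).differentiableAt
      exact this.continuous.continuousOn
    · intro t ht
      exact (hψd t).differentiableAt.differentiableWithinAt
    · intro t ht
      rw [interior_Icc] at ht
      rw [(hψd t).deriv]
      have hmemt : u + t • d ∈ X := hmem t ⟨le_of_lt ht.1, le_of_lt ht.2⟩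
      have hcs : ⟪g (u + t • d) - g u, d⟫ ≤ ‖g (u + t • d) - g u‖ * ‖d‖ :=
        real_inner_le_norm _ _
      have hlipb : ‖g (u + t • d) - g u‖ ≤ L * (t * ‖d‖) := by
        have := hlip _ hmemt _ hu
        simpa [norm_smul, abs_of_pos ht.1, mul_assoc] using this
      have hdn : (0:ℝ) ≤ ‖d‖ := norm_nonneg _
      have : ⟪g (u + t • d), d⟫ - ⟪g u, d⟫ ≤ L * ‖d‖ ^ 2 * t := by
        rw [← inner_sub_left]
        calc ⟪g (u + t • d) - g u, d⟫ ≤ ‖g (u + t • d) - g u‖ * ‖d‖ := hcs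
          _ ≤ L * (t * ‖d‖) * ‖d‖ := by nlinarith
          _ = L * ‖d‖ ^ 2 * t := by ring
      nlinarith
  have h01 := hanti (Set.left_mem_Icc.2 zero_le_one) (Set.right_mem_Icc.2 zero_le_one) zero_le_one
  have hψ0 : ψ 0 = ℓ u := by simp [hψ]
  have hψ1 : ψ 1 = ℓ v - ⟪g u, d⟫ - L / 2 * ‖d‖ ^ 2 := by simp [hψ, hd]
  rw [hψ0, hψ1] at h01
  rw [hd] at *
  linarith

/-- One-step contraction of inexact Frank–Wolfe for convex smooth objectives. -/
theorem stmt_17 {n : ℕ}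
    (X : Set (EuclideanSpace ℝ (Fin n))) (hXcomp : IsCompact X) (hXconv : Convex ℝ X)
    (D L : ℝ) (hD : 0 ≤ D) (hL : 0 ≤ L)
    (hdiam : ∀ u ∈ X, ∀ v ∈ X, ‖u - v‖ ≤ D)
    (ℓ : EuclideanSpace ℝ (Fin n) → ℝ)
    (gradℓ : EuclideanSpace ℝ (Fin n) → EuclideanSpace ℝ (Fin n))
    (hconv : ConvexOn ℝ Set.univ ℓ)
    (hdiff : ∀ x, HasGradientAt ℓ (gradℓ x) x)
    (hgradlip : ∀ u ∈ X, ∀ v ∈ X, ‖gradℓ u - gradℓ v‖ ≤ L * ‖u - v‖)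
    (xstar : EuclideanSpace ℝ (Fin n)) (hxstar : xstar ∈ X)
    (hmin : ∀ y ∈ X, ℓ xstar ≤ ℓ y)
    (x : ℕ → EuclideanSpace ℝ (Fin n)) (s : ℕ → EuclideanSpace ℝ (Fin n))
    (F : ℕ → EuclideanSpace ℝ (Fin n)) (ε : ℕ → ℝ) (γ : ℝ)
    (hγ0 : 0 < γ) (hγ1 : γ < 1)
    (hxX : ∀ k, x k ∈ X) (hsX : ∀ k, s k ∈ X)
    (hsmin : ∀ k, ∀ u ∈ X, ⟪F k, s k⟫ ≤ ⟪F k, u⟫)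
    (hupd : ∀ k, x (k + 1) = (1 - γ) • x k + γ • s k)
    (herr : ∀ k, ‖gradℓ (x k) - F k‖ ≤ ε k) :
    ∀ k, ℓ (x (k + 1)) - ℓ xstar ≤
      (1 - γ) * (ℓ (x k) - ℓ xstar) + γ * ε k * D + L / 2 * γ ^ 2 * D ^ 2 := by
  intro k
  set g : EuclideanSpace ℝ (Fin n) := gradℓ (x k) with hg
  have hxk1X : x (k + 1) ∈ X := by
    rw [hupd k]
    exact hXconv (hxX k) (hsX k) (by linarith) (le_of_lt hγ0) (by ring)
  have hdiff_eq : x (k + 1) - x k = γ • (s k - x k) := by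
    rw [hupd k, smul_sub, sub_smul, one_smul]; abel
  -- descent lemma
  have h1 : ℓ (x (k + 1)) ≤ ℓ (x k) + ⟪g, x (k + 1) - x k⟫ + L / 2 * ‖x (k + 1) - x k‖ ^ 2 :=
    descent_lemma X hXconv L hL ℓ gradℓ hdiff hgradlip (x k) (hxX k) (x (k + 1)) hxk1X
  -- rewrite the inner term
  have h2 : ⟪g, x (k + 1) - x k⟫ = γ * ⟪g, s k - x k⟫ := by
    rw [hdiff_eq, real_inner_smul_right]
  -- norm bound
  have hnorm : ‖x (k + 1) - x k‖ ≤ γ * D := by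
    rw [hdiff_eq, norm_smul, Real.norm_eq_abs, abs_of_pos hγ0]
    exact mul_le_mul_of_nonneg_left (hdiam _ (hsX k) _ (hxX k)) (le_of_lt hγ0)
  have hnorm2 : ‖x (k + 1) - x k‖ ^ 2 ≤ γ ^ 2 * D ^ 2 := by
    have := pow_le_pow_left₀ (norm_nonneg _) hnorm 2
    calc ‖x (k + 1) - x k‖ ^ 2 ≤ (γ * D) ^ 2 := this
      _ = γ ^ 2 * D ^ 2 := by ring
  -- key bound on ⟪g, s k - x k⟫
  have hkey : ⟪g, s k - x k⟫ ≤ ε k * D + (ℓ xstar - ℓ (x k)) := by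
    have hsplit : ⟪g, s k - x k⟫ =
        ⟪g - F k, s k - xstar⟫ + ⟪F k, s k - xstar⟫ + ⟪g, xstar - x k⟫ := by
      simp only [inner_sub_left, inner_sub_right]
      ring
    have hb1 : ⟪g - F k, s k - xstar⟫ ≤ ε k * D := by
      calc ⟪g - F k, s k - xstar⟫ ≤ ‖g - F k‖ * ‖s k - xstar‖ := real_inner_le_norm _ _
        _ ≤ ε k * D :=
          mul_le_mul (herr k) (hdiam _ (hsX k) _ hxstar) (norm_nonneg _)
            ((norm_nonneg _).trans (herr k))
    have hb2 : ⟪F k, s k - xstar⟫ ≤ 0 := by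
      have := hsmin k xstar hxstar
      rw [inner_sub_right]; linarith
    have hb3 : ⟪g, xstar - x k⟫ ≤ ℓ xstar - ℓ (x k) :=
      grad_convex_le ℓ gradℓ hconv hdiff (x k) xstar
    linarith [hsplit, hb1, hb2, hb3]
  -- combine
  have hL2 : L / 2 * ‖x (k + 1) - x k‖ ^ 2 ≤ L / 2 * (γ ^ 2 * D ^ 2) :=
    mul_le_mul_of_nonneg_left hnorm2 (by linarith)
  have h3 : γ * ⟪g, s k - x k⟫ ≤ γ * (ε k * D + (ℓ xstar - ℓ (x k))) :=
    mul_le_mul_of_nonneg_left hkey (le_of_lt hγ0)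
  rw [h2] at h1
  nlinarith [h1, h3, hL2]
end
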